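/- A set X ⊆ κ^ω is U-measurable if and only if there exist sets Z, Y with Z ⊆ X ⊆ Y, Z an F_σ set, Y a G_δ set, and Y \ Z U-null. -/

import Mathlib

universe u

namespace UMeas

variable {A : Type u}

/-- The first `n` values of an infinite sequence, as a list. -/
def seg (s : ℕ → A) (n : ℕ) : List A := List.ofFn (fun i : Fin n => s i)

/-- `T` is a `U`-branching tree: a set of finite sequences closed under initial
segments, containing the empty sequence, whose branching sets are in `U`. -/
def IsUTree (U : Ultrafilter A) (T : Set (List A)) : Prop :=
  ([] ∈ T) ∧ (∀ σ ∈ T, ∀ τ : List A, τ <+: σ → τ ∈ T) ∧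
    ∀ σ ∈ T, {a : A | σ ++ [a] ∈ T} ∈ U

/-- The set of infinite branches through `T`. -/
def branches (T : Set (List A)) : Set (ℕ → A) := {s | ∀ n, seg s n ∈ T}

/-- Concatenation `σ⌢s` of a finite sequence with an infinite sequence. -/
def app (σ : List A) (s : ℕ → A) : ℕ → A :=
  fun n => if h : n < σ.length then σ.get ⟨n, h⟩ else s (n - σ.length)

/-- The section `X↾σ = {s | σ⌢s ∈ X}`. -/
def sect (X : Set (ℕ → A)) (σ : List A) : Set (ℕ → A) := {s | app σ s ∈ X}

def ULarge (U : Ultrafilter A) (X : Set (ℕ → A)) : Prop :=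
  ∃ T, IsUTree U T ∧ branches T ⊆ X

def USmall (U : Ultrafilter A) (X : Set (ℕ → A)) : Prop :=
  ∃ T, IsUTree U T ∧ branches T ∩ X = ∅

def UDetermined (U : Ultrafilter A) (X : Set (ℕ → A)) : Prop :=
  ULarge U X ∨ USmall U X

def UNull (U : Ultrafilter A) (X : Set (ℕ → A)) : Prop :=
  ∀ σ : List A, USmall U (sect X σ)

def UMeasurable (U : Ultrafilter A) (X : Set (ℕ → A)) : Prop :=
  ∀ σ : List A, UDetermined U (sect X σ)

end UMeas

/-!
Every open set `W` is `U`-determined below any `U`-tree `T`: let `D` be the set of nodes `σ` such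
that `W↾σ` is `U`-large inside `T↾σ`. If the root is not in `D`, the nodes of `T` with no prefix
in `D` form a `U`-tree (a node with `U`-many children in `D` is itself in `D`), and its branches
avoid `W`, since a branch in `W` has an initial segment whose whole cylinder lies in `W`.
A fusion argument extends this to `F_σ` sets `⋃ Cₙ`: once `T` is shrunk so that membership of its
branches in `Cₙ` depends only on their first `n` values, the union is relatively open.

Given `Z ⊆ X ⊆ Y` with `Z` an `F_σ` and `Y \ Z` null, a `U`-tree avoiding `(Y \ Z)↾σ` shrinks to
one inside `Z↾σ ⊆ X↾σ` or outside `Z↾σ`, hence outside `Y↾σ ⊇ X↾σ`. Conversely, for a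
`U`-measurable `X`, let `Z` consist of the sequences `s` whose tail after some position `k` is a
branch of the tree witnessing that `X↾(s↾k)` is `U`-large; it is `F_σ`, lies inside `X`, and its
section at `σ` contains the branches of the witness at `σ`. The same construction for the
complement of `X` gives the complement of `Y`.
-/

namespace UMeas

open Set PiNat

variable {A : Type u} {U : Ultrafilter A}

def shift (k : ℕ) (s : ℕ → A) : ℕ → A := fun n => s (n + k)

@[simp] theorem seg_length (s : ℕ → A) (n : ℕ) : (seg s n).length = n := List.length_ofFn

theorem seg_succ (s : ℕ → A) (n : ℕ) : seg s (n + 1) = s 0 :: seg (shift 1 s) n := by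
  simp [seg, List.ofFn_succ, shift]

theorem seg_eq_seg_iff {s t : ℕ → A} {n : ℕ} : seg t n = seg s n ↔ t ∈ cylinder s n := by
  simp [seg, List.ofFn_inj, funext_iff, mem_cylinder_iff, Fin.forall_iff]

theorem shift_succ (k : ℕ) (s : ℕ → A) : shift (k + 1) s = shift k (shift 1 s) := by
  funext n; simp [shift, Nat.add_assoc]

@[simp] theorem shift_zero (s : ℕ → A) : shift 0 s = s := rfl

@[simp] theorem app_nil (s : ℕ → A) : app [] s = s := by
  funext n; simp [app]

theorem app_cons (a : A) (σ : List A) (s : ℕ → A) :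
    app (a :: σ) s = app [a] (app σ s) := by
  funext n; cases n <;> simp [app]

theorem app_append (σ τ : List A) (s : ℕ → A) : app (σ ++ τ) s = app σ (app τ s) := by
  induction σ with
  | nil => simp
  | cons a σ ih => rw [List.cons_append, app_cons, ih, ← app_cons]

theorem app_singleton_shift (s : ℕ → A) : app [s 0] (shift 1 s) = s := by
  funext n; cases n <;> simp [app, shift]

theorem shift_one_app_singleton (a : A) (s : ℕ → A) : shift 1 (app [a] s) = s := by
  funext n; simp [app, shift]

theorem app_seg_shift (s : ℕ → A) (n : ℕ) : app (seg s n) (shift n s) = s := by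
  induction n generalizing s with
  | zero => simp [seg]
  | succ n ih => rw [seg_succ, app_cons, shift_succ n, ih, app_singleton_shift]

theorem seg_app_length (σ : List A) (s : ℕ → A) : seg (app σ s) σ.length = σ := by
  induction σ with
  | nil => rfl
  | cons a σ ih =>
    rw [List.length_cons, seg_succ, app_cons, shift_one_app_singleton, ih]
    simp [app]

theorem shift_length_app (σ : List A) (s : ℕ → A) : shift σ.length (app σ s) = s := by
  induction σ with
  | nil => funext n; simp [shift]
  | cons a σ ih => rw [List.length_cons, shift_succ, app_cons, shift_one_app_singleton, ih]

@[simp] theorem sect_nil (X : Set (ℕ → A)) : sect X [] = X := by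
  simp [sect]

theorem sect_sect (X : Set (ℕ → A)) (σ τ : List A) : sect (sect X σ) τ = sect X (σ ++ τ) := by
  ext s; simp [sect, app_append]

section Topology

variable [TopologicalSpace A]

theorem continuous_app (σ : List A) : Continuous (app σ) :=
  continuous_pi fun n => by
    by_cases h : n < σ.length
    · simp only [app, dif_pos h]; exact continuous_const
    · simp only [app, dif_neg h]; exact continuous_apply _

theorem continuous_shift (k : ℕ) : Continuous (shift k : (ℕ → A) → ℕ → A) :=
  continuous_pi fun n => continuous_apply (n + k)

variable [DiscreteTopology A]

theorem isOpen_setOf_seg_mem (n : ℕ) (P : Set (List A)) : IsOpen {s : ℕ → A | seg s n ∈ P} :=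
  isOpen_iff_mem_nhds.2 fun s hs => Filter.mem_of_superset
    ((isOpen_cylinder _ s n).mem_nhds (self_mem_cylinder s n))
    fun t ht => by rwa [mem_ofPred_eq, seg_eq_seg_iff.2 ht]

theorem isClosed_setOf_seg_mem (n : ℕ) (P : Set (List A)) : IsClosed {s : ℕ → A | seg s n ∈ P} :=
  isOpen_compl_iff.1 (isOpen_setOf_seg_mem n Pᶜ)

theorem isClosed_branches (T : Set (List A)) : IsClosed (branches T) := by
  rw [branches, ofPred_forall]
  exact isClosed_iInter fun n => isClosed_setOf_seg_mem n T

theorem isClosed_setOf_mem_seg {C : List A → Set (ℕ → A)} (hC : ∀ σ, IsClosed (C σ)) (n : ℕ) :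
    IsClosed {s | s ∈ C (seg s n)} := by
  convert isClosed_iInter fun σ => (isClosed_setOf_seg_mem n {σ}ᶜ).union (hC σ) using 1
  ext s
  simp [or_iff_not_imp_left]

theorem exists_sect_seg_eq_univ {W : Set (ℕ → A)} (hW : IsOpen W) {s : ℕ → A} (hs : s ∈ W) :
    ∃ n, sect W (seg s n) = univ := by
  obtain ⟨_, ⟨x, n, rfl⟩, hsx, hxW⟩ :=
    (isTopologicalBasis_cylinders _).exists_subset_of_mem_open hs hW
  refine ⟨n, eq_univ_of_forall fun t => hxW ?_⟩
  rw [← mem_cylinder_iff_eq.1 hsx, ← seg_eq_seg_iff]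
  simpa using seg_app_length (seg s n) t

end Topology

def treeSect (T : Set (List A)) (σ : List A) : Set (List A) := {τ | σ ++ τ ∈ T}

@[simp] theorem treeSect_nil (T : Set (List A)) : treeSect T [] = T := rfl

theorem treeSect_treeSect (T : Set (List A)) (σ τ : List A) :
    treeSect (treeSect T σ) τ = treeSect T (σ ++ τ) := by
  ext; simp [treeSect]

theorem IsUTree.treeSect {T : Set (List A)} (hT : IsUTree U T) {σ : List A} (hσ : σ ∈ T) :
    IsUTree U (treeSect T σ) :=
  ⟨by simpa [UMeas.treeSect], fun _ hτ _ ⟨r, hr⟩ => hT.2.1 _ hτ _ ⟨r, by simp [← hr]⟩,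
    fun τ hτ => by simpa [UMeas.treeSect] using hT.2.2 _ hτ⟩

theorem branches_mono {T T' : Set (List A)} (h : T ⊆ T') : branches T ⊆ branches T' :=
  fun _ hs n => h (hs n)

@[simp] theorem branches_empty : branches (∅ : Set (List A)) = ∅ :=
  eq_empty_of_forall_notMem fun _ hs => hs 0

def consTree (S : Set A) (T : A → Set (List A)) : Set (List A) :=
  {τ | ∀ a ρ, τ = a :: ρ → a ∈ S ∧ ρ ∈ T a}

section ConsTree

variable {S : Set A} {T : A → Set (List A)}

@[simp] theorem nil_mem_consTree : [] ∈ consTree S T := by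
  simp [consTree]

@[simp] theorem cons_mem_consTree {a : A} {ρ : List A} :
    a :: ρ ∈ consTree S T ↔ a ∈ S ∧ ρ ∈ T a := by
  simp [consTree]

theorem isUTree_consTree (hS : S ∈ U) (hT : ∀ a ∈ S, IsUTree U (T a)) :
    IsUTree U (consTree S T) := by
  refine ⟨nil_mem_consTree, ?_, ?_⟩
  · rintro (_ | ⟨a, τ⟩) hτ ρ hρ
    · rw [List.prefix_nil.1 hρ]; exact nil_mem_consTree
    · rw [cons_mem_consTree] at hτ
      obtain rfl | ⟨ρ', rfl, hρ'⟩ := List.prefix_cons_iff.1 hρ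
      · exact nil_mem_consTree
      · exact cons_mem_consTree.2 ⟨hτ.1, (hT a hτ.1).2.1 _ hτ.2 _ hρ'⟩
  · rintro (_ | ⟨a, τ⟩) hτ
    · exact Filter.mem_of_superset hS fun a ha => cons_mem_consTree.2 ⟨ha, (hT a ha).1⟩
    · rw [cons_mem_consTree] at hτ
      simpa [hτ.1] using (hT a hτ.1).2.2 _ hτ.2

theorem mem_branches_consTree {s : ℕ → A} :
    s ∈ branches (consTree S T) ↔ s 0 ∈ S ∧ shift 1 s ∈ branches (T (s 0)) := by
  have hsucc (n : ℕ) : seg s (n + 1) ∈ consTree S T ↔ s 0 ∈ S ∧ seg (shift 1 s) n ∈ T (s 0) := by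
    rw [seg_succ, cons_mem_consTree]
  refine ⟨fun h => ⟨((hsucc 0).1 (h 1)).1, fun n => ((hsucc n).1 (h (n + 1))).2⟩, fun h n => ?_⟩
  cases n with
  | zero => exact nil_mem_consTree
  | succ n => exact (hsucc n).2 ⟨h.1, h.2 n⟩

theorem consTree_subset {T₀ : Set (List A)} (h₀ : [] ∈ T₀) (h : ∀ a ∈ S, T a ⊆ treeSect T₀ [a]) :
    consTree S T ⊆ T₀ := by
  rintro (_ | ⟨a, ρ⟩) hρ
  · exact h₀
  · rw [cons_mem_consTree] at hρ
    exact h a hρ.1 hρ.2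

end ConsTree

def ULargeIn (U : Ultrafilter A) (T : Set (List A)) (X : Set (ℕ → A)) : Prop :=
  ∃ T' ⊆ T, IsUTree U T' ∧ branches T' ⊆ X

def UDeterminedBelow (U : Ultrafilter A) (X : Set (ℕ → A)) : Prop :=
  ∀ T, IsUTree U T → ULargeIn U T X ∨ ULargeIn U T Xᶜ

section ULargeIn

variable {T : Set (List A)} {X Y : Set (ℕ → A)}

theorem ULargeIn.uLarge (h : ULargeIn U T X) : ULarge U X :=
  let ⟨T', _, hT', hX⟩ := h
  ⟨T', hT', hX⟩

theorem ULargeIn.mono_tree {T' : Set (List A)} (h : ULargeIn U T X) (hT : T ⊆ T') :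
    ULargeIn U T' X :=
  let ⟨T'', hsub, hT'', hX⟩ := h
  ⟨T'', hsub.trans hT, hT'', hX⟩

theorem ULargeIn.mono_of_inter (h : ULargeIn U T X) (hXY : branches T ∩ X ⊆ Y) :
    ULargeIn U T Y :=
  let ⟨T', hsub, hT', hX⟩ := h
  ⟨T', hsub, hT', fun _ hs => hXY ⟨branches_mono hsub hs, hX hs⟩⟩

theorem ULargeIn.of_children (hT : [] ∈ T)
    (h : {a | ULargeIn U (treeSect T [a]) (sect X [a])} ∈ U) : ULargeIn U T X := by
  have hchild : ∀ a ∈ {a | ULargeIn U (treeSect T [a]) (sect X [a])}, ∃ T' ⊆ treeSect T [a],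
      IsUTree U T' ∧ branches T' ⊆ sect X [a] := fun _ ha => ha
  choose! T' hsub hT' hX using hchild
  refine ⟨consTree _ T', consTree_subset hT hsub, isUTree_consTree h hT', fun s hs => ?_⟩
  rw [mem_branches_consTree] at hs
  rw [← app_singleton_shift s]
  exact hX _ hs.1 hs.2

end ULargeIn

theorem UDeterminedBelow.compl {X : Set (ℕ → A)} (h : UDeterminedBelow U X) :
    UDeterminedBelow U Xᶜ := fun T hT => by
  rw [compl_compl]; exact (h T hT).symm

theorem uDeterminedBelow_of_isOpen [TopologicalSpace A] [DiscreteTopology A] {W : Set (ℕ → A)}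
    (hW : IsOpen W) : UDeterminedBelow U W := by
  intro T hT
  set D := {σ | ULargeIn U (treeSect T σ) (sect W σ)}
  by_cases hroot : [] ∈ D
  · left; simpa [D] using hroot
  right
  refine ⟨{τ | τ ∈ T ∧ ∀ ρ, ρ <+: τ → ρ ∉ D}, fun τ hτ => hτ.1,
    ⟨⟨hT.1, fun ρ hρ => List.prefix_nil.1 hρ ▸ hroot⟩, ?_, ?_⟩, ?_⟩
  · rintro τ ⟨hτT, hτD⟩ ρ hρ
    exact ⟨hT.2.1 _ hτT _ hρ, fun ρ' hρ' => hτD _ (hρ'.trans hρ)⟩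
  · rintro τ ⟨hτT, hτD⟩
    have hchildren : {a | τ ++ [a] ∈ D} ∉ U := fun h =>
      hτD τ List.prefix_rfl <| ULargeIn.of_children (by simpa [treeSect] using hτT)
        (by simp only [treeSect_treeSect, sect_sect]; exact h)
    filter_upwards [hT.2.2 τ hτT, Ultrafilter.compl_mem_iff_notMem.2 hchildren] with a haT haD
    exact ⟨haT, fun ρ hρ => (List.prefix_concat_iff.1 hρ).elim (· ▸ haD) (hτD ρ)⟩
  · intro s hs hsW
    obtain ⟨n, hn⟩ := exists_sect_seg_eq_univ hW hsW
    exact (hs n).2 _ List.prefix_rfl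
      ⟨treeSect T (seg s n), subset_rfl, hT.treeSect (hs n).1, hn ▸ subset_univ _⟩

def DecidesAt (T : Set (List A)) (n : ℕ) (F : Set (ℕ → A)) : Prop :=
  ∀ s ∈ branches T, ∀ t ∈ branches T, seg s n = seg t n → (s ∈ F ↔ t ∈ F)

theorem DecidesAt.mono {T T' : Set (List A)} {n : ℕ} {F : Set (ℕ → A)} (h : DecidesAt T n F)
    (hT : T' ⊆ T) : DecidesAt T' n F :=
  fun s hs t ht => h s (branches_mono hT hs) t (branches_mono hT ht)

theorem DecidesAt.exists_isOpen [TopologicalSpace A] [DiscreteTopology A] {T : Set (List A)}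
    {n : ℕ} {F : Set (ℕ → A)} (h : DecidesAt T n F) :
    ∃ V, IsOpen V ∧ branches T ∩ V = branches T ∩ F := by
  refine ⟨{t | seg t n ∈ (seg · n) '' (branches T ∩ F)}, isOpen_setOf_seg_mem n _, ?_⟩
  ext t
  simp only [mem_inter_iff, mem_ofPred_eq, mem_image]
  exact and_congr_right fun ht =>
    ⟨fun ⟨s, ⟨hs, hsF⟩, hst⟩ => (h s hs t ht hst).1 hsF, fun htF => ⟨t, ⟨ht, htF⟩, rfl⟩⟩

theorem exists_decidesAt {T : Set (List A)} (hT : IsUTree U T) {F : Set (ℕ → A)}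
    (hF : ∀ σ, UDeterminedBelow U (sect F σ)) (n : ℕ) :
    ∃ T' ⊆ T, IsUTree U T' ∧ (∀ τ ∈ T, τ.length < n → τ ∈ T') ∧ DecidesAt T' n F := by
  induction n generalizing T F with
  | zero =>
    rcases hF [] T hT with ⟨T', hsub, hT', hF'⟩ | ⟨T', hsub, hT', hF'⟩
    · exact ⟨T', hsub, hT', by simp, fun s hs t ht _ => iff_of_true (by simpa using hF' hs)
        (by simpa using hF' ht)⟩
    · exact ⟨T', hsub, hT', by simp, fun s hs t ht _ => iff_of_false (by simpa using hF' hs)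
        (by simpa using hF' ht)⟩
  | succ n ih =>
    have hchild : ∀ a ∈ {a | [a] ∈ T}, ∃ T' ⊆ treeSect T [a], IsUTree U T' ∧
        (∀ τ ∈ treeSect T [a], τ.length < n → τ ∈ T') ∧ DecidesAt T' n (sect F [a]) :=
      fun a ha => ih (hT.treeSect ha) fun σ => by rw [sect_sect]; exact hF _
    choose! T' hsub hT' hagree hdec using hchild
    refine ⟨consTree {a | [a] ∈ T} T', consTree_subset hT.1 hsub,
      isUTree_consTree (hT.2.2 [] hT.1) hT', ?_, ?_⟩
    · rintro (_ | ⟨a, ρ⟩) hρ hlen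
      · exact nil_mem_consTree
      · have ha : [a] ∈ T := hT.2.1 _ hρ _ (List.cons_prefix_cons.2 ⟨rfl, List.nil_prefix⟩)
        exact cons_mem_consTree.2 ⟨ha, hagree a ha ρ hρ (by simpa using hlen)⟩
    · intro s hs t ht hst
      rw [seg_succ, seg_succ, List.cons.injEq] at hst
      rw [mem_branches_consTree] at hs ht
      rw [← app_singleton_shift s, ← app_singleton_shift t, ← hst.1]
      exact hdec (s 0) hs.1 _ hs.2 _ (hst.1 ▸ ht.2) hst.2

theorem isUTree_iInter {T : ℕ → Set (List A)} (hT : ∀ n, IsUTree U (T n)) (hanti : Antitone T)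
    (hagree : ∀ n, ∀ τ ∈ T n, τ.length < n → τ ∈ T (n + 1)) : IsUTree U (⋂ n, T n) := by
  have hmem : ∀ τ ∈ T (τ.length + 1), τ ∈ ⋂ n, T n := by
    refine fun τ hτ => mem_iInter.2 fun m => (le_total m (τ.length + 1)).elim
      (fun h => hanti h hτ) fun h => ?_
    induction m, h using Nat.le_induction with
    | base => exact hτ
    | succ m hm ih => exact hagree m _ ih (by omega)
  refine ⟨mem_iInter.2 fun n => (hT n).1,
    fun σ hσ τ hτ => mem_iInter.2 fun n => (hT n).2.1 _ (mem_iInter.1 hσ n) _ hτ, fun τ hτ => ?_⟩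
  filter_upwards [(hT (τ.length + 2)).2.2 τ (mem_iInter.1 hτ _)] with a ha
  exact hmem _ (by simpa using ha)

theorem exists_forall_decidesAt {T : Set (List A)} (hT : IsUTree U T) {C : ℕ → Set (ℕ → A)}
    (hC : ∀ n σ, UDeterminedBelow U (sect (C n) σ)) :
    ∃ T' ⊆ T, IsUTree U T' ∧ ∀ n, DecidesAt T' n (C n) := by
  have step (n : ℕ) (S : {S // IsUTree U S}) : ∃ S' : {S // IsUTree U S}, S'.1 ⊆ S.1 ∧
      (∀ τ ∈ S.1, τ.length < n → τ ∈ S'.1) ∧ DecidesAt S'.1 n (C n) :=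
    let ⟨S', hsub, hS', hagree, hdec⟩ := exists_decidesAt S.2 (hC n) n
    ⟨⟨S', hS'⟩, hsub, hagree, hdec⟩
  choose next hsub hagree hdec using step
  let fusion (n : ℕ) : {S // IsUTree U S} := Nat.rec ⟨T, hT⟩ next n
  exact ⟨⋂ n, (fusion n).1, iInter_subset _ 0,
    isUTree_iInter (fun n => (fusion n).2) (antitone_nat_of_succ_le fun n => hsub n _)
      (fun n => hagree n _), fun n => (hdec n _).mono (iInter_subset _ (n + 1))⟩

theorem uSmall_iff_uLarge_compl {X : Set (ℕ → A)} : USmall U X ↔ ULarge U Xᶜ := by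
  simp only [USmall, ULarge, subset_compl_iff_disjoint_right, disjoint_iff_inter_eq_empty]

theorem sect_iUnion (F : ℕ → Set (ℕ → A)) (σ : List A) :
    sect (⋃ n, F n) σ = ⋃ n, sect (F n) σ :=
  preimage_iUnion

theorem exists_branches_subset (U : Ultrafilter A) (X : Set (ℕ → A)) :
    ∃ T : Set (List A), (ULarge U X → IsUTree U T) ∧ branches T ⊆ X := by
  by_cases h : ULarge U X
  · obtain ⟨T, hT, hX⟩ := h
    exact ⟨T, fun _ => hT, hX⟩
  · exact ⟨∅, fun h' => (h h').elim, by simp⟩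

def graftLevel (T : List A → Set (List A)) (k : ℕ) : Set (ℕ → A) :=
  {s | shift k s ∈ branches (T (seg s k))}

theorem iUnion_graftLevel_subset {T : List A → Set (List A)} {X : Set (ℕ → A)}
    (h : ∀ σ, branches (T σ) ⊆ sect X σ) : ⋃ k, graftLevel T k ⊆ X :=
  iUnion_subset fun k s hs => by simpa [sect, app_seg_shift] using h _ hs

theorem branches_subset_sect_iUnion_graftLevel (T : List A → Set (List A)) (σ : List A) :
    branches (T σ) ⊆ sect (⋃ k, graftLevel T k) σ := fun s hs =>
  mem_iUnion.2 ⟨σ.length, show shift _ (app σ s) ∈ branches (T (seg (app σ s) _)) by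
    rwa [seg_app_length, shift_length_app]⟩

section Topology

variable [TopologicalSpace A] [DiscreteTopology A]

theorem isClosed_graftLevel (T : List A → Set (List A)) (k : ℕ) : IsClosed (graftLevel T k) :=
  isClosed_setOf_mem_seg (fun σ => (isClosed_branches (T σ)).preimage (continuous_shift k)) k

theorem uDeterminedBelow_of_isClosed {F : Set (ℕ → A)} (hF : IsClosed F) :
    UDeterminedBelow U F := by
  simpa using (uDeterminedBelow_of_isOpen (U := U) hF.isOpen_compl).compl

theorem uDeterminedBelow_iUnion {C : ℕ → Set (ℕ → A)}
    (hC : ∀ n σ, UDeterminedBelow U (sect (C n) σ)) : UDeterminedBelow U (⋃ n, C n) := by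
  intro T hT
  obtain ⟨T', hsub, hT', hdec⟩ := exists_forall_decidesAt hT hC
  choose V hV hVC using fun n => (hdec n).exists_isOpen
  have hrel : branches T' ∩ ⋃ n, V n = branches T' ∩ ⋃ n, C n := by
    simp only [inter_iUnion, hVC]
  refine (uDeterminedBelow_of_isOpen (isOpen_iUnion hV) T' hT').imp
    (fun h => (h.mono_of_inter (hrel ▸ inter_subset_right)).mono_tree hsub)
    (fun h => (h.mono_of_inter (Y := (⋃ n, C n)ᶜ) fun s ⟨hs, hsV⟩ hsC => hsV ?_).mono_tree hsub)
  exact (hrel.symm ▸ ⟨hs, hsC⟩ : s ∈ branches T' ∩ ⋃ n, V n).2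

theorem uDeterminedBelow_iUnion_of_isClosed {F : ℕ → Set (ℕ → A)} (hF : ∀ n, IsClosed (F n)) :
    UDeterminedBelow U (⋃ n, F n) :=
  uDeterminedBelow_iUnion fun n σ =>
    uDeterminedBelow_of_isClosed ((hF n).preimage (continuous_app σ))

theorem exists_isFσ_isGδ_of_uMeasurable {X : Set (ℕ → A)} (hX : UMeasurable U X) :
    ∃ Z Y : Set (ℕ → A), Z ⊆ X ∧ X ⊆ Y ∧
      (∃ F : ℕ → Set (ℕ → A), (∀ n, IsClosed (F n)) ∧ Z = ⋃ n, F n) ∧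
      IsGδ Y ∧ UNull U (Y \ Z) := by
  choose TL hTL hTLX using fun σ => exists_branches_subset U (sect X σ)
  choose TS hTS hTSX using fun σ => exists_branches_subset U (sect Xᶜ σ)
  refine ⟨⋃ k, graftLevel TL k, (⋃ k, graftLevel TS k)ᶜ, iUnion_graftLevel_subset hTLX,
    subset_compl_comm.1 (iUnion_graftLevel_subset hTSX), ⟨_, isClosed_graftLevel TL, rfl⟩, ?_,
    fun σ => ?_⟩
  · rw [compl_iUnion]
    exact .iInter_of_isOpen fun k => (isClosed_graftLevel TS k).isOpen_compl
  · rcases hX σ with hL | hS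
    · exact ⟨TL σ, hTL σ hL, eq_empty_of_forall_notMem fun s ⟨hs, hsYZ⟩ =>
        hsYZ.2 (branches_subset_sect_iUnion_graftLevel TL σ hs)⟩
    · exact ⟨TS σ, hTS σ (uSmall_iff_uLarge_compl.1 hS), eq_empty_of_forall_notMem
        fun s ⟨hs, hsYZ⟩ => hsYZ.1 (branches_subset_sect_iUnion_graftLevel TS σ hs)⟩

theorem uMeasurable_of_iUnion_isClosed_subset {X Y : Set (ℕ → A)} {F : ℕ → Set (ℕ → A)}
    (hF : ∀ n, IsClosed (F n)) (hFX : ⋃ n, F n ⊆ X) (hXY : X ⊆ Y)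
    (hnull : UNull U (Y \ ⋃ n, F n)) : UMeasurable U X := by
  intro σ
  obtain ⟨T₀, hT₀, hT₀null⟩ := hnull σ
  have hFσ : UDeterminedBelow U (sect (⋃ n, F n) σ) := by
    rw [sect_iUnion]
    exact uDeterminedBelow_iUnion_of_isClosed fun n => (hF n).preimage (continuous_app σ)
  rw [UDetermined, uSmall_iff_uLarge_compl]
  refine (hFσ T₀ hT₀).imp (fun h => ?_) fun h => ?_
  · exact (h.mono_of_inter (inter_subset_right.trans (preimage_mono hFX))).uLarge
  · refine (h.mono_of_inter (Y := (sect X σ)ᶜ) fun s ⟨hs, hsF⟩ hsX => ?_).uLarge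
    exact eq_empty_iff_forall_notMem.1 hT₀null s ⟨hs, hXY hsX, hsF⟩

end Topology

end UMeas

theorem stmt7 {A : Type u} [TopologicalSpace A] [DiscreteTopology A]
    (U : Ultrafilter A) (X : Set (ℕ → A)) :
    UMeas.UMeasurable U X ↔
      ∃ Z Y : Set (ℕ → A), Z ⊆ X ∧ X ⊆ Y ∧
        (∃ F : ℕ → Set (ℕ → A), (∀ n, IsClosed (F n)) ∧ Z = ⋃ n, F n) ∧
        IsGδ Y ∧ UMeas.UNull U (Y \ Z) :=
  ⟨UMeas.exists_isFσ_isGδ_of_uMeasurable, fun ⟨_, _, hZX, hXY, ⟨_, hF, hZ⟩, _, hnull⟩ =>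
    UMeas.uMeasurable_of_iUnion_isClosed_subset hF (hZ ▸ hZX) hXY (hZ ▸ hnull)⟩
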